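/- arXiv:1208.3087 — 4 statements merged into one kernel-verified Lean document; each statement's English description precedes it below -/
import Mathlib

section
/- For every γ ∈ ℝ, every natural number h, and all reals m₁, m₂, the quadratic form (1/2)·(m₁, m₂)ᵀ P_γ^h (m₁, m₂) equals (1/4)(m₁ + m₂)² + (1/4)(1−γ)^h (m₁ − m₂)². Consequently, if a multiplier takes the two values m₁ and m₂ with equal probability and switches according to P_γ, then E(m_i m_{i−h}) = (E m)² + Var(m)·(1−γ)^h. -/
/-!
The matrices `P_γ` form a one-parameter family closed under multiplication, with `1 - γ`
(the eigenvalue on `(1, -1)`; the eigenvalue on `(1, 1)` is `1`) multiplicative: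
`P_a P_b = P_c` where `1 - c = (1 - a)(1 - b)`. Hence `P_γ ^ h = P_{1 - (1 - γ) ^ h}`, and the
quadratic form of a single `P_β` is read off directly.
-/

/-- The transition matrix of one binomial MSMD multiplier: diagonal entries `1 - γ/2`,
off-diagonal entries `γ/2`. -/
noncomputable def Pgamma (γ : ℝ) : Matrix (Fin 2) (Fin 2) ℝ :=
  Matrix.of fun i j => if i = j then 1 - γ / 2 else γ / 2

lemma Pgamma_zero : Pgamma 0 = 1 := by
  ext i j
  fin_cases i <;> fin_cases j <;> simp [Pgamma]

lemma Pgamma_mul (a b : ℝ) : Pgamma a * Pgamma b = Pgamma (1 - (1 - a) * (1 - b)) := by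
  ext i j
  fin_cases i <;> fin_cases j <;> simp [Pgamma, Matrix.mul_apply, Fin.sum_univ_two] <;> ring

lemma Pgamma_pow (γ : ℝ) (h : ℕ) : Pgamma γ ^ h = Pgamma (1 - (1 - γ) ^ h) := by
  induction h with
  | zero => simp [Pgamma_zero]
  | succ n ih => rw [pow_succ, ih, Pgamma_mul, sub_sub_cancel, pow_succ]

lemma dotProduct_Pgamma_mulVec (γ m₁ m₂ : ℝ) :
    dotProduct ![m₁, m₂] ((Pgamma γ).mulVec ![m₁, m₂]) =
      ((m₁ + m₂) ^ 2 + (1 - γ) * (m₁ - m₂) ^ 2) / 2 := by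
  simp only [dotProduct, Matrix.mulVec, Pgamma, Matrix.of_apply, Fin.sum_univ_two, Fin.isValue,
    Matrix.cons_val_zero, Matrix.cons_val_one, ite_mul, ↓reduceIte, zero_ne_one, one_ne_zero]
  ring

/-- the quadratic form `(1/2)·(m₁,m₂)ᵀ P_γ^h (m₁,m₂)` equals
`(1/4)(m₁+m₂)² + (1/4)(1-γ)^h (m₁-m₂)²`. -/
theorem quadform_Pgamma_pow (γ : ℝ) (h : ℕ) (m₁ m₂ : ℝ) :
    (1 / 2 : ℝ) * dotProduct ![m₁, m₂] ((Pgamma γ ^ h).mulVec ![m₁, m₂]) =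
      (1 / 4) * (m₁ + m₂) ^ 2 + (1 / 4) * (1 - γ) ^ h * (m₁ - m₂) ^ 2 := by
  rw [Pgamma_pow, dotProduct_Pgamma_mulVec, sub_sub_cancel]
  ring
end

section
/- Let k ≥ 1, δ₁, …, δ_k ∈ (0,1), v ≥ 0, w ≥ 0, and define the autocovariance sequence c(0) = (1+v)^k (1+w) − 1 and, for integer h ≠ 0, c(h) = ∏_{j=1}^k (1 + v·δ_j^{|h|}) − 1. Then for every ω ∈ ℝ the series Σ_{h ∈ ℤ} c(h) e^{−iωh} converges absolutely and equals (1+v)^k · w + Σ_{∅ ≠ S ⊆ {1,…,k}} v^{|S|} (1 − D_S²) / (1 + D_S² − 2 D_S cos ω), where D_S = ∏_{j∈S} δ_j. -/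
/-!
Expanding the product, `c h = (1 + v) ^ k * w * [h = 0] + ∑_{S ≠ ∅} v ^ |S| * D_S ^ |h|`, so the
Fourier series of `c` is a finite combination of two-sided geometric series. Splitting at `h = 0`,
`∑_h D ^ |h| e^{-iωh} = 1 / (1 - D e^{-iω}) + D e^{iω} / (1 - D e^{iω})`, which is the Poisson
kernel `(1 - D²) / (1 + D² - 2 D cos ω)` for `|D| < 1`.
-/

open Complex Finset

theorem Finset.prod_one_add_mul_pow_sub_one {ι R : Type*} [Fintype ι] [DecidableEq ι]
    [CommRing R] (v : R) (δ : ι → R) (n : ℕ) :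
    ∏ j, (1 + v * δ j ^ n) - 1 = ∑ S ∈ univ.powerset.erase ∅, v ^ #S * (∏ j ∈ S, δ j) ^ n := by
  rw [prod_one_add, ← add_sum_erase _ _ (empty_mem_powerset _)]
  simp [prod_mul_distrib, prod_pow]

theorem Finset.abs_prod_lt_one {ι : Type*} {s : Finset ι} (hs : s.Nonempty) {δ : ι → ℝ}
    (hδ : ∀ j ∈ s, δ j ∈ Set.Ioo 0 1) : |∏ j ∈ s, δ j| < 1 := by
  rw [abs_of_pos (prod_pos fun j hj => (hδ j hj).1)]
  calc ∏ j ∈ s, δ j < ∏ _j ∈ s, (1 : ℝ) :=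
        prod_lt_prod_of_nonempty (fun j hj => (hδ j hj).1) (fun j hj => (hδ j hj).2) hs
    _ = 1 := prod_const_one

theorem one_sub_ne_zero_of_norm_lt_one {R : Type*} [NormedRing R] [NormOneClass R] {u : R}
    (hu : ‖u‖ < 1) : 1 - u ≠ 0 := by
  rw [sub_ne_zero]
  rintro rfl
  simp at hu

theorem hasSum_pow_natAbs_mul_exp {D : ℝ} (hD : |D| < 1) (ω : ℝ) :
    HasSum (fun h : ℤ => (D : ℂ) ^ h.natAbs * exp (-(I * ω * h)))
      (((1 - D ^ 2) / (1 + D ^ 2 - 2 * D * Real.cos ω) : ℝ) : ℂ) := by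
  set u : ℂ := D * exp (-(I * ω))
  set u' : ℂ := D * exp (I * ω)
  have hu : ‖u‖ < 1 := by simpa [u, norm_exp] using hD
  have hu' : ‖u'‖ < 1 := by simpa [u', norm_exp] using hD
  have hnonneg : HasSum (fun n : ℕ => (D : ℂ) ^ n * exp (-(I * ω * n))) (1 - u)⁻¹ :=
    (hasSum_geometric_of_norm_lt_one hu).congr_fun fun n => by
      rw [mul_pow, ← exp_nat_mul]; ring_nf
  have hneg : HasSum (fun n : ℕ => (D : ℂ) ^ (n + 1) * exp (I * ω * (n + 1)))
      (u' * (1 - u')⁻¹) :=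
    ((hasSum_geometric_of_norm_lt_one hu').mul_left u').congr_fun fun n => by
      rw [← pow_succ', mul_pow, ← exp_nat_mul]; push_cast; ring_nf
  have hsum : HasSum (fun h : ℤ => (D : ℂ) ^ h.natAbs * exp (-(I * ω * h)))
      ((1 - u)⁻¹ + u' * (1 - u')⁻¹) := by
    refine HasSum.of_nat_of_neg_add_one (by simpa using hnonneg) (hneg.congr_fun fun n => ?_)
    rw [show (-((n : ℤ) + 1)).natAbs = n + 1 by omega]; push_cast; ring_nf
  have hprod : u * u' = (D : ℂ) ^ 2 := by
    simp only [u, u']; rw [mul_mul_mul_comm, ← exp_add]; simp [sq]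
  have hdenom : (1 - u) * (1 - u') = 1 + (D : ℂ) ^ 2 - 2 * D * cos ω := by
    have hcos : 2 * cos ω = exp (I * ω) + exp (-(I * ω)) := by
      rw [two_cos, neg_mul, mul_comm (ω : ℂ) I]
    linear_combination hprod + D * hcos
  convert hsum using 1
  have h1 := one_sub_ne_zero_of_norm_lt_one hu
  have h1' := one_sub_ne_zero_of_norm_lt_one hu'
  push_cast
  rw [← hdenom, ← hprod]
  field_simp
  ring

theorem msmd_autocov_eq {k : ℕ} {δ : Fin k → ℝ} {v w : ℝ} {c : ℤ → ℝ}
    (hc : ∀ h : ℤ, c h = if h = 0 then (1 + v) ^ k * (1 + w) - 1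
      else (∏ j, (1 + v * δ j ^ h.natAbs)) - 1) (h : ℤ) :
    c h = (if h = 0 then (1 + v) ^ k * w else 0) +
      ∑ S ∈ univ.powerset.erase ∅, v ^ #S * (∏ j ∈ S, δ j) ^ h.natAbs := by
  rw [hc h, ← prod_one_add_mul_pow_sub_one]
  split_ifs with h0
  · simp [h0]; ring
  · ring

theorem msmd_spectral_density_general
    (k : ℕ) (δ : Fin k → ℝ) (hδ : ∀ j, δ j ∈ Set.Ioo (0 : ℝ) 1)
    (v w : ℝ)
    (c : ℤ → ℝ)
    (hc : ∀ h : ℤ, c h = if h = 0 then (1 + v) ^ k * (1 + w) - 1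
      else (∏ j, (1 + v * δ j ^ h.natAbs)) - 1)
    (ω : ℝ) :
    Summable (fun h : ℤ => ‖(c h : ℂ) * Complex.exp (-(Complex.I * ω * h))‖) ∧
      ∑' h : ℤ, (c h : ℂ) * Complex.exp (-(Complex.I * ω * h)) =
        (((1 + v) ^ k * w +
          ∑ S ∈ Finset.univ.powerset.erase (∅ : Finset (Fin k)),
            v ^ S.card * (1 - (∏ j ∈ S, δ j) ^ 2) /
              (1 + (∏ j ∈ S, δ j) ^ 2 - 2 * (∏ j ∈ S, δ j) * Real.cos ω) : ℝ) : ℂ) := by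
  have hD : ∀ S ∈ univ.powerset.erase (∅ : Finset (Fin k)), |∏ j ∈ S, δ j| < 1 := fun S hS =>
    abs_prod_lt_one (nonempty_iff_ne_empty.2 (ne_of_mem_erase hS)) fun j _ => hδ j
  have hsum := (hasSum_ite_eq (0 : ℤ) (((1 + v) ^ k * w : ℝ) : ℂ)).add
    (hasSum_sum fun S hS => (hasSum_pow_natAbs_mul_exp (hD S hS) ω).mul_left ((v : ℂ) ^ #S))
  have key : HasSum (fun h : ℤ => (c h : ℂ) * exp (-(I * ω * h))) _ :=
    hsum.congr_fun fun h => by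
      rw [msmd_autocov_eq hc h, ofReal_add, add_mul, ofReal_sum, sum_mul]
      congr 1
      · split_ifs with h0 <;> simp [h0]
      · exact sum_congr rfl fun S _ => by push_cast; ring
  refine ⟨summable_norm_iff.2 key.summable, key.tsum_eq.trans ?_⟩
  push_cast
  simp only [mul_div_assoc]

/-- the spectral density of the MSMD duration process. With
`c(0) = (1+v)^k(1+w) − 1` and `c(h) = ∏ⱼ(1 + v·δⱼ^{|h|}) − 1` for `h ≠ 0`, the series
`Σ_{h ∈ ℤ} c(h) e^{−iωh}` converges absolutely and equals
`(1+v)^k·w + Σ_{∅ ≠ S ⊆ {1,…,k}} v^{|S|}(1 − D_S²)/(1 + D_S² − 2 D_S cos ω)`,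
where `D_S = ∏_{j∈S} δⱼ`. -/
theorem msmd_spectral_density
    (k : ℕ) (hk : 1 ≤ k) (δ : Fin k → ℝ) (hδ : ∀ j, δ j ∈ Set.Ioo (0 : ℝ) 1)
    (v w : ℝ) (hv : 0 ≤ v) (hw : 0 ≤ w)
    (c : ℤ → ℝ)
    (hc : ∀ h : ℤ, c h = if h = 0 then (1 + v) ^ k * (1 + w) - 1
      else (∏ j, (1 + v * δ j ^ h.natAbs)) - 1)
    (ω : ℝ) :
    Summable (fun h : ℤ => ‖(c h : ℂ) * Complex.exp (-(Complex.I * ω * h))‖) ∧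
      ∑' h : ℤ, (c h : ℂ) * Complex.exp (-(Complex.I * ω * h)) =
        (((1 + v) ^ k * w +
          ∑ S ∈ Finset.univ.powerset.erase (∅ : Finset (Fin k)),
            v ^ S.card * (1 - (∏ j ∈ S, δ j) ^ 2) /
              (1 + (∏ j ∈ S, δ j) ^ 2 - 2 * (∏ j ∈ S, δ j) * Real.cos ω) : ℝ) : ℂ) :=
  msmd_spectral_density_general k δ hδ v w c hc ω
end

section
/- Let μ be a Borel probability measure on ℝ with ∫ y dμ = 0 and V = ∫ y² dμ < ∞, let γ ∈ (0,1) and δ = 1 − γ. Then for all natural numbers h₁ < h₂, q ≥ 1, and every x ∈ ℝ, ∫∫ y·z K_{h₂−h₁}(y, dz) K_{h₁+q}(x, dy) = δ^{h₂+q} x² + δ^{h₂−h₁} (1 − δ^{h₁+q}) V. That is, for the centered multiplier chain, E(m̄_{i+h₁} m̄_{i+h₂} | m̄_{i−q} = x) = δ^{h₂+q} x² + δ^{h₂−h₁}(1−δ^{h₁+q}) E(m̄²). -/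
/-! Each kernel `K_h(x, ·)` integrates `f` to `(1 - δ^h) ∫ f dμ + δ^h f(x)`. Because `μ` is
centered, the inner integral `∫ y z K_{h₂-h₁}(y, dz)` collapses to `δ^{h₂-h₁} y²`, and integrating
`y²` against `K_{h₁+q}(x, ·)` gives `(1 - δ^{h₁+q}) V + δ^{h₁+q} x²`. -/

open MeasureTheory

/-- The `h`-step renewal kernel of one MSMD multiplier with renewal distribution `μ` and
switching probability `γ`: `K_h(x, ·) = (1 - (1-γ)^h)·μ + (1-γ)^h·δ_x`. -/
noncomputable def renewalKernel (μ : Measure ℝ) (γ : ℝ) (h : ℕ) (x : ℝ) : Measure ℝ :=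
  ENNReal.ofReal (1 - (1 - γ) ^ h) • μ + ENNReal.ofReal ((1 - γ) ^ h) • Measure.dirac x

theorem integral_renewalKernel (μ : Measure ℝ) {γ : ℝ} (hγ : γ ∈ Set.Icc (0 : ℝ) 1) (h : ℕ)
    (x : ℝ) {f : ℝ → ℝ} (hf : Integrable f μ) :
    ∫ z, f z ∂(renewalKernel μ γ h x) = (1 - (1 - γ) ^ h) * ∫ z, f z ∂μ + (1 - γ) ^ h * f x := by
  have hpow_nonneg : 0 ≤ (1 - γ) ^ h := pow_nonneg (by linarith [hγ.2]) h
  have hpow_le_one : (1 - γ) ^ h ≤ 1 := pow_le_one₀ (by linarith [hγ.2]) (by linarith [hγ.1])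
  have hf_dirac : Integrable f (Measure.dirac x) := integrable_dirac enorm_lt_top
  rw [renewalKernel, integral_add_measure (hf.smul_measure ENNReal.ofReal_ne_top)
      (hf_dirac.smul_measure ENNReal.ofReal_ne_top),
    integral_smul_measure, integral_smul_measure, integral_dirac,
    ENNReal.toReal_ofReal (by linarith), ENNReal.toReal_ofReal hpow_nonneg, smul_eq_mul,
    smul_eq_mul]

theorem integral_mul_renewalKernel_self {μ : Measure ℝ} {γ : ℝ} (hγ : γ ∈ Set.Icc (0 : ℝ) 1)
    (hint : Integrable (fun z : ℝ => z) μ) (hmean : ∫ z, z ∂μ = 0) (h : ℕ) (y : ℝ) :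
    ∫ z, y * z ∂(renewalKernel μ γ h y) = (1 - γ) ^ h * y ^ 2 := by
  rw [integral_renewalKernel μ hγ h y (hint.const_mul y), integral_const_mul, hmean]
  ring

theorem centered_chain_cross_moment_general
    (μ : Measure ℝ) [IsProbabilityMeasure μ]
    (hmean : ∫ y, y ∂μ = 0) (hmom : Integrable (fun y : ℝ => y ^ 2) μ)
    (V : ℝ) (hV : V = ∫ y, y ^ 2 ∂μ)
    (γ : ℝ) (hγ : γ ∈ Set.Ioo (0 : ℝ) 1) (δ : ℝ) (hδ : δ = 1 - γ)
    (h₁ h₂ q : ℕ) (hh : h₁ < h₂) (x : ℝ) :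
    ∫ y, (∫ z, y * z ∂(renewalKernel μ γ (h₂ - h₁) y)) ∂(renewalKernel μ γ (h₁ + q) x) =
      δ ^ (h₂ + q) * x ^ 2 + δ ^ (h₂ - h₁) * (1 - δ ^ (h₁ + q)) * V := by
  have hγ' : γ ∈ Set.Icc (0 : ℝ) 1 := Set.Ioo_subset_Icc_self hγ
  have hint : Integrable (fun z : ℝ => z) μ :=
    ((memLp_two_iff_integrable_sq measurable_id.aestronglyMeasurable).2 hmom).integrable
      one_le_two
  have hexp : h₂ + q = (h₂ - h₁) + (h₁ + q) := by omega
  simp_rw [integral_mul_renewalKernel_self hγ' hint hmean,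
    integral_renewalKernel μ hγ' _ x (hmom.const_mul _), integral_const_mul, ← hV, ← hδ, hexp,
    pow_add]
  ring

/-- for the centered multiplier chain (stationary law `μ` with mean 0 and
second moment `V`), for `h₁ < h₂`, `q ≥ 1` and every `x`,
`E(m̄_{i+h₁} m̄_{i+h₂} | m̄_{i−q} = x) = δ^{h₂+q} x² + δ^{h₂−h₁}(1−δ^{h₁+q}) V`
where `δ = 1 − γ`. -/
theorem centered_chain_cross_moment
    (μ : Measure ℝ) [IsProbabilityMeasure μ]
    (hmean : ∫ y, y ∂μ = 0) (hmom : Integrable (fun y : ℝ => y ^ 2) μ)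
    (V : ℝ) (hV : V = ∫ y, y ^ 2 ∂μ)
    (γ : ℝ) (hγ : γ ∈ Set.Ioo (0 : ℝ) 1) (δ : ℝ) (hδ : δ = 1 - γ)
    (h₁ h₂ q : ℕ) (hh : h₁ < h₂) (hq : 1 ≤ q) (x : ℝ) :
    ∫ y, (∫ z, y * z ∂(renewalKernel μ γ (h₂ - h₁) y)) ∂(renewalKernel μ γ (h₁ + q) x) =
      δ ^ (h₂ + q) * x ^ 2 + δ ^ (h₂ - h₁) * (1 - δ ^ (h₁ + q)) * V :=
  centered_chain_cross_moment_general μ hmean hmom V hV γ hγ δ hδ h₁ h₂ q hh x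
end

section
/- Let f and g be measurable functions from [−π, π] to ℝ that are strictly positive almost everywhere (with respect to Lebesgue measure), such that log f, log g, and f/g are Lebesgue integrable on [−π, π]. If f ≠ g on a set of positive Lebesgue measure, then ∫_{−π}^{π} (log g(ω) + f(ω)/g(ω)) dω > ∫_{−π}^{π} (log f(ω) + 1) dω. In particular, the limiting Whittle criterion Q(θ) = (1/2π)∫(log f(ω;θ) + f(ω;θ₀)/f(ω;θ)) dω is uniquely minimized at the spectral density of the true parameter θ₀, provided distinct parameters give spectral densities differing on a set of positive Lebesgue measure. -/
/-!
Pointwise, `log a + 1 ≤ log b + a / b` for `a, b > 0` is `log t ≤ t - 1` at `t = a / b`, with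
equality only at `a = b`. Integrating, the integral of the (nonnegative) gap is positive as soon as
the gap is positive on a set of positive measure, i.e. wherever `f ≠ g`.
-/

open MeasureTheory Real

namespace Real

theorem log_add_one_le_log_add_div {a b : ℝ} (ha : 0 < a) (hb : 0 < b) :
    log a + 1 ≤ log b + a / b := by
  have := log_le_sub_one_of_pos (div_pos ha hb)
  rw [log_div ha.ne' hb.ne'] at this
  linarith

theorem log_add_one_lt_log_add_div {a b : ℝ} (ha : 0 < a) (hb : 0 < b) (hab : a ≠ b) :
    log a + 1 < log b + a / b := by
  have := log_lt_sub_one_of_pos (div_pos ha hb) (by rwa [ne_eq, div_eq_one_iff_eq hb.ne'])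
  rw [log_div ha.ne' hb.ne'] at this
  linarith

end Real

namespace MeasureTheory

variable {α : Type*} [MeasurableSpace α] {μ : Measure α}

theorem integral_lt_integral_of_ae_le_of_ae_lt_on {f₁ f₂ : α → ℝ} {s : Set α}
    (h₁ : Integrable f₁ μ) (h₂ : Integrable f₂ μ) (hle : f₁ ≤ᵐ[μ] f₂)
    (hlt : ∀ᵐ x ∂μ, x ∈ s → f₁ x < f₂ x) (hs : 0 < μ s) :
    ∫ x, f₁ x ∂μ < ∫ x, f₂ x ∂μ := by
  have hgap : 0 ≤ᵐ[μ] f₂ - f₁ := by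
    filter_upwards [hle] with x hx using sub_nonneg.mpr hx
  have hsupp : s ≤ᵐ[μ] Function.support (f₂ - f₁) := by
    filter_upwards [hlt] with x hx hxs using sub_ne_zero.mpr (hx hxs).ne'
  rw [← sub_pos, ← integral_sub' h₂ h₁, integral_pos_iff_support_of_nonneg_ae hgap (h₂.sub h₁)]
  exact hs.trans_le (measure_mono_ae hsupp)

theorem integral_log_add_one_lt_integral_log_add_div [IsFiniteMeasure μ] {f g : α → ℝ}
    (hfpos : ∀ᵐ x ∂μ, 0 < f x) (hgpos : ∀ᵐ x ∂μ, 0 < g x)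
    (hlogf : Integrable (fun x => log (f x)) μ) (hlogg : Integrable (fun x => log (g x)) μ)
    (hfg : Integrable (fun x => f x / g x) μ) (hne : 0 < μ {x | f x ≠ g x}) :
    ∫ x, log (f x) + 1 ∂μ < ∫ x, log (g x) + f x / g x ∂μ := by
  refine integral_lt_integral_of_ae_le_of_ae_lt_on (hlogf.add (integrable_const 1))
    (hlogg.add hfg) ?_ ?_ hne
  · filter_upwards [hfpos, hgpos] with x hfx hgx using log_add_one_le_log_add_div hfx hgx
  · filter_upwards [hfpos, hgpos] with x hfx hgx hx using log_add_one_lt_log_add_div hfx hgx hx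

end MeasureTheory

theorem whittle_identification_general
    (f g : ℝ → ℝ)
    (hfpos : ∀ᵐ ω ∂(volume.restrict (Set.Icc (-π) π)), 0 < f ω)
    (hgpos : ∀ᵐ ω ∂(volume.restrict (Set.Icc (-π) π)), 0 < g ω)
    (hlogf : IntegrableOn (fun ω => Real.log (f ω)) (Set.Icc (-π) π))
    (hlogg : IntegrableOn (fun ω => Real.log (g ω)) (Set.Icc (-π) π))
    (hfg : IntegrableOn (fun ω => f ω / g ω) (Set.Icc (-π) π))
    (hne : 0 < volume {ω ∈ Set.Icc (-π) π | f ω ≠ g ω}) :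
    (∫ ω in Set.Icc (-π) π, (Real.log (f ω) + 1)) <
      ∫ ω in Set.Icc (-π) π, (Real.log (g ω) + f ω / g ω) := by
  refine integral_log_add_one_lt_integral_log_add_div hfpos hgpos hlogf hlogg hfg ?_
  rwa [Measure.restrict_apply' measurableSet_Icc, Set.inter_comm]

/-- identification for the limiting Whittle criterion. Let `f, g` be
measurable functions on `[−π,π]` that are strictly positive a.e. (Lebesgue), with
`log f`, `log g` and `f/g` integrable on `[−π,π]`. If `f ≠ g` on a set of positive
Lebesgue measure, then
`∫ (log g(ω) + f(ω)/g(ω)) dω > ∫ (log f(ω) + 1) dω`;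
i.e. the Whittle criterion is uniquely minimized at the true spectral density. -/
theorem whittle_identification
    (f g : ℝ → ℝ) (hf : Measurable f) (hg : Measurable g)
    (hfpos : ∀ᵐ ω ∂(volume.restrict (Set.Icc (-π) π)), 0 < f ω)
    (hgpos : ∀ᵐ ω ∂(volume.restrict (Set.Icc (-π) π)), 0 < g ω)
    (hlogf : IntegrableOn (fun ω => Real.log (f ω)) (Set.Icc (-π) π))
    (hlogg : IntegrableOn (fun ω => Real.log (g ω)) (Set.Icc (-π) π))
    (hfg : IntegrableOn (fun ω => f ω / g ω) (Set.Icc (-π) π))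
    (hne : 0 < volume {ω ∈ Set.Icc (-π) π | f ω ≠ g ω}) :
    (∫ ω in Set.Icc (-π) π, (Real.log (f ω) + 1)) <
      ∫ ω in Set.Icc (-π) π, (Real.log (g ω) + f ω / g ω) :=
  whittle_identification_general f g hfpos hgpos hlogf hlogg hfg hne
end
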